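/- Let p be an odd prime and k an integer with 1 \le k \le p-1. Then \lim_{g \to \infty} \big(D_p(g,k)\big)^{1/g} = 4\cos^2(\pi/(2p)). -/

import Mathlib

/-!
Pascal's rule for `catC` gives `dP p (n + 1) k = dP p n (k - 1) + dP p n (k + 1)`, and the
symmetries `j ↦ n + 1 - j` (antisymmetry of `catC n`) and `j ↦ j + p` of the periodised sum make
`dP p n k` vanish at `k = 0` and `k = p`. The binomial transform defining `DP` turns this into
`DP p (g + 1) = (2 + A) (DP p g)`, with `A` the adjacency operator of the path `1, …, p - 1`.
The Perron eigenvector `k ↦ sin (k π / p)` of `2 + A`, with eigenvalue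
`2 + 2 cos (π / p) = 4 cos² (π / (2 p))`, is positive on the path; pairing it with `DP p g`
bounds `DP p g k` above by a constant times the `g`-th power of the eigenvalue. Conversely every
step spreads mass to the neighbouring sites, so `DP p (g + p) k` dominates each `DP p g j`, which
gives the matching lower bound.
-/

/-- `binZ n j` is the binomial coefficient `n choose j` for `j : ℤ`, which is `0`
unless `0 ≤ j ≤ n`. -/
def binZ (n : ℕ) (j : ℤ) : ℤ := if 0 ≤ j then (n.choose j.toNat : ℤ) else 0

/-- `catC n j = C(n,j) = binom(n,j) - binom(n,j-1)`. -/
def catC (n : ℕ) (j : ℤ) : ℤ := binZ n j - binZ n (j - 1)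

/-- `dP p n k = d_p(n,k) = ∑_{s ∈ ℤ} C(n, (n+1-k)/2 + s p)` when `k ≡ n+1 (mod 2)`,
and `0` otherwise. -/
noncomputable def dP (p n k : ℕ) : ℤ :=
  if k % 2 = (n + 1) % 2 then ∑ᶠ s : ℤ, catC n (((n : ℤ) + 1 - k) / 2 + s * p) else 0

/-- `DP p g k = D_p(g,k) = ∑_{n=0}^{g} 2^{g-n} (g choose n) d_p(n,k)`. -/
noncomputable def DP (p g k : ℕ) : ℤ :=
  ∑ n ∈ Finset.range (g + 1), 2 ^ (g - n) * (g.choose n : ℤ) * dP p n k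

open Finset Filter Topology Real

theorem tendsto_rpow_one_div_of_bounds {a : ℕ → ℝ} {c C r : ℝ} (hc : 0 < c) (hC : 0 < C)
    (hr : 0 < r) (hlow : ∀ᶠ g in atTop, c * r ^ g ≤ a g) (hup : ∀ᶠ g in atTop, a g ≤ C * r ^ g) :
    Tendsto (fun g : ℕ => a g ^ (1 / (g : ℝ))) atTop (𝓝 r) := by
  have root_mul_pow : ∀ {b : ℝ}, 0 < b → ∀ g : ℕ, g ≠ 0 →
      (b * r ^ g) ^ (1 / (g : ℝ)) = b ^ (1 / (g : ℝ)) * r := by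
    intro b hb g hg
    rw [mul_rpow hb.le (by positivity), ← rpow_natCast, ← rpow_mul hr.le,
      mul_one_div_cancel (by exact_mod_cast hg), rpow_one]
  have root_tendsto : ∀ {b : ℝ}, 0 < b →
      Tendsto (fun g : ℕ => b ^ (1 / (g : ℝ)) * r) atTop (𝓝 r) := by
    intro b hb
    simpa using (tendsto_const_nhds.rpow tendsto_one_div_atTop_nhds_zero_nat
      (Or.inl hb.ne')).mul_const r
  refine tendsto_of_tendsto_of_tendsto_of_le_of_le' (root_tendsto hc) (root_tendsto hC) ?_ ?_
  · filter_upwards [hlow, eventually_ne_atTop 0] with g hg hg0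
    rw [← root_mul_pow hc g hg0]
    exact rpow_le_rpow (by positivity) hg (by positivity)
  · filter_upwards [hlow, hup, eventually_ne_atTop 0] with g hgl hgu hg0
    rw [← root_mul_pow hC g hg0]
    exact rpow_le_rpow ((by positivity : 0 ≤ c * r ^ g).trans hgl) hgu (by positivity)

theorem sum_range_succ_mul_eq_sum_mul_pred {R : Type*} [NonUnitalNonAssocSemiring R]
    {a b : ℕ → R} {n : ℕ} (ha₀ : a 0 = 0) (ha : a n = 0) :
    ∑ k ∈ range n, a (k + 1) * b k = ∑ k ∈ range n, a k * b (k - 1) := by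
  have h := sum_range_succ' (fun k => a k * b (k - 1)) n
  rw [sum_range_succ, ha, ha₀] at h
  simpa using h.symm

noncomputable def perronVec (p k : ℕ) : ℝ := sin (k * π / p)

noncomputable def growthRate (p : ℕ) : ℝ := 2 + 2 * cos (π / p)

section perronVec

variable {p k : ℕ}

@[simp] lemma perronVec_zero : perronVec p 0 = 0 := by simp [perronVec]

@[simp] lemma perronVec_self : perronVec p p = 0 := by
  rcases eq_or_ne p 0 with rfl | hp
  · simp [perronVec]
  · simp [perronVec, mul_div_cancel_left₀ π (Nat.cast_ne_zero.mpr hp)]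

lemma perronVec_pos (hk : 0 < k) (hkp : k < p) : 0 < perronVec p k := by
  have hp : (0 : ℝ) < p := by exact_mod_cast hk.trans hkp
  apply sin_pos_of_pos_of_lt_pi (by positivity)
  rw [div_lt_iff₀ hp, mul_comm π]
  exact mul_lt_mul_of_pos_right (Nat.cast_lt.mpr hkp) pi_pos

lemma perronVec_nonneg (hkp : k ≤ p) : 0 ≤ perronVec p k := by
  rcases Nat.eq_zero_or_pos k with rfl | hk
  · simp
  rcases hkp.lt_or_eq with hkp | rfl
  · exact (perronVec_pos hk hkp).le
  · simp

lemma perronVec_le_one : perronVec p k ≤ 1 := sin_le_one _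

lemma perronVec_pred_add_succ (hk : 1 ≤ k) :
    perronVec p (k - 1) + perronVec p (k + 1) = 2 * cos (π / p) * perronVec p k := by
  have h : ((k - 1 : ℕ) : ℝ) * π / p = k * π / p - π / p := by
    rw [Nat.cast_sub hk]; ring
  have h' : ((k + 1 : ℕ) : ℝ) * π / p = k * π / p + π / p := by
    push_cast; ring
  simp only [perronVec, h, h', sin_sub, sin_add]
  ring

lemma growthRate_eq_four_mul_cos_sq : growthRate p = 4 * cos (π / (2 * p)) ^ 2 := by
  rw [growthRate, cos_sq, ← mul_div_assoc, mul_div_mul_left _ _ two_ne_zero]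
  ring

lemma growthRate_pos (hp : 2 ≤ p) : 0 < growthRate p := by
  have hp' : (2 : ℝ) ≤ p := by exact_mod_cast hp
  have : 0 ≤ cos (π / p) := cos_nonneg_of_neg_pi_div_two_le_of_le
    (by linarith [pi_pos, div_pos pi_pos (by linarith : (0 : ℝ) < p)])
    (div_le_div_of_nonneg_left pi_pos.le two_pos hp')
  rw [growthRate]
  linarith

end perronVec

structure IsPathRecurrence (p : ℕ) (f : ℕ → ℕ → ℝ) : Prop where
  at_zero : ∀ g, f g 0 = 0
  at_p : ∀ g, f g p = 0
  succ : ∀ g k, 1 ≤ k → k < p → f (g + 1) k = f g (k - 1) + 2 * f g k + f g (k + 1)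

noncomputable def perronSum (p : ℕ) (f : ℕ → ℕ → ℝ) (g : ℕ) : ℝ :=
  ∑ k ∈ range p, f g k * perronVec p k

lemma mul_perronVec_le_perronSum {p : ℕ} {f : ℕ → ℕ → ℝ} (hnn : ∀ g, ∀ k ≤ p, 0 ≤ f g k)
    (g : ℕ) {k : ℕ} (hkp : k < p) :
    f g k * perronVec p k ≤ perronSum p f g :=
  single_le_sum (f := fun i => f g i * perronVec p i)
    (fun i hi => mul_nonneg (hnn g i (mem_range.mp hi).le) (perronVec_nonneg (mem_range.mp hi).le))
    (mem_range.mpr hkp)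

namespace IsPathRecurrence

variable {p : ℕ} {f : ℕ → ℕ → ℝ}

lemma perronSum_succ (hf : IsPathRecurrence p f) (g : ℕ) :
    perronSum p f (g + 1) = growthRate p * perronSum p f g := by
  have expand : ∀ k ∈ range p, f (g + 1) k * perronVec p k
      = perronVec p k * f g (k - 1) + 2 * (f g k * perronVec p k)
        + f g (k + 1) * perronVec p k := by
    intro k hk
    rcases Nat.eq_zero_or_pos k with rfl | hk0
    · simp [hf.at_zero]
    · rw [hf.succ g k hk0 (mem_range.mp hk)]
      ring
  have eigen : ∀ k ∈ range p, perronVec p (k + 1) * f g k + 2 * (f g k * perronVec p k)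
      + f g k * perronVec p (k - 1) = growthRate p * (f g k * perronVec p k) := by
    intro k _
    rcases Nat.eq_zero_or_pos k with rfl | hk0
    · simp [hf.at_zero]
    · rw [growthRate]
      linear_combination f g k * perronVec_pred_add_succ (p := p) hk0
  -- summation by parts moves the shifts from `f g` onto `perronVec p`, both vanishing at `0, p`
  rw [perronSum, sum_congr rfl expand, sum_add_distrib, sum_add_distrib,
    ← sum_range_succ_mul_eq_sum_mul_pred perronVec_zero perronVec_self,
    sum_range_succ_mul_eq_sum_mul_pred (hf.at_zero g) (hf.at_p g), ← sum_add_distrib,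
    ← sum_add_distrib, sum_congr rfl eigen, ← mul_sum, perronSum]

lemma perronSum_eq (hf : IsPathRecurrence p f) (g : ℕ) :
    perronSum p f g = growthRate p ^ g * perronSum p f 0 := by
  induction g with
  | zero => simp
  | succ g ih => rw [hf.perronSum_succ, ih, pow_succ]; ring

lemma nonneg (hf : IsPathRecurrence p f) (h₀ : ∀ k < p, 0 ≤ f 0 k) (g : ℕ) :
    ∀ k ≤ p, 0 ≤ f g k := by
  induction g with
  | zero =>
    intro k hk
    rcases hk.lt_or_eq with hk | rfl
    · exact h₀ k hk
    · exact (hf.at_p 0).ge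
  | succ g ih =>
    intro k hk
    rcases Nat.eq_zero_or_pos k with rfl | hk0
    · exact (hf.at_zero _).ge
    rcases hk.lt_or_eq with hk | rfl
    · rw [hf.succ g k hk0 hk]
      have := ih (k - 1) (by omega)
      have := ih k hk.le
      have := ih (k + 1) hk
      positivity
    · exact (hf.at_p _).ge

lemma le_succ_of_adjacent (hf : IsPathRecurrence p f) (hnn : ∀ g, ∀ k ≤ p, 0 ≤ f g k)
    {g j k : ℕ} (hk : 1 ≤ k) (hkp : k < p) (hjk : j ≤ k + 1) (hkj : k ≤ j + 1) :
    f g j ≤ f (g + 1) k := by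
  rw [hf.succ g k hk hkp]
  have h₁ := hnn g (k - 1) (by omega)
  have h₂ := hnn g k hkp.le
  have h₃ := hnn g (k + 1) hkp
  obtain rfl | rfl | rfl : j = k - 1 ∨ j = k ∨ j = k + 1 := by omega
  all_goals linarith

lemma le_add_of_dist_le (hf : IsPathRecurrence p f) (hnn : ∀ g, ∀ k ≤ p, 0 ≤ f g k)
    (g m : ℕ) {j k : ℕ} (hj : 1 ≤ j) (hjp : j < p) (hk : 1 ≤ k) (hkp : k < p)
    (hjk : j ≤ k + m) (hkj : k ≤ j + m) : f g j ≤ f (g + m) k := by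
  induction m generalizing k with
  | zero =>
    obtain rfl : j = k := by omega
    rfl
  | succ m ih =>
    -- step from `k` one site towards `j`
    obtain ⟨k', hk', hk'p, hjk', hkj', hkk', hk'k⟩ : ∃ k', 1 ≤ k' ∧ k' < p ∧ j ≤ k' + m ∧
        k' ≤ j + m ∧ k ≤ k' + 1 ∧ k' ≤ k + 1 := by
      by_cases h : j + m < k
      · exact ⟨k - 1, by omega⟩
      by_cases h' : k + m < j
      · exact ⟨k + 1, by omega⟩
      · exact ⟨k, by omega⟩
    exact (ih hk' hk'p hjk' hkj').trans (hf.le_succ_of_adjacent hnn hk hkp hk'k hkk')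

lemma perronSum_le (hf : IsPathRecurrence p f) (hnn : ∀ g, ∀ k ≤ p, 0 ≤ f g k) (g : ℕ) {k : ℕ}
    (hk : 1 ≤ k) (hkp : k < p) : perronSum p f g ≤ p * f (g + p) k := by
  calc perronSum p f g ≤ ∑ _j ∈ range p, f (g + p) k := by
        refine sum_le_sum fun j hj => ?_
        have hjp := mem_range.mp hj
        calc f g j * perronVec p j ≤ f g j :=
              mul_le_of_le_one_right (hnn g j hjp.le) perronVec_le_one
          _ ≤ f (g + p) k := by
            rcases Nat.eq_zero_or_pos j with rfl | hj0
            · exact (hf.at_zero g).trans_le (hnn _ k hkp.le)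
            · exact hf.le_add_of_dist_le hnn g p hj0 hjp hk hkp (by omega) (by omega)
    _ = p * f (g + p) k := by simp

theorem tendsto_rpow_one_div (hf : IsPathRecurrence p f) (h₀ : ∀ k < p, 0 ≤ f 0 k)
    (hpos : ∃ j, 0 < j ∧ j < p ∧ 0 < f 0 j) {k : ℕ} (hk : 1 ≤ k) (hkp : k < p) :
    Tendsto (fun g : ℕ => f g k ^ (1 / (g : ℝ))) atTop (𝓝 (growthRate p)) := by
  have hnn := hf.nonneg h₀
  obtain ⟨j, hj, hjp, hfj⟩ := hpos
  have hS : 0 < perronSum p f 0 := (mul_pos hfj (perronVec_pos hj hjp)).trans_le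
    (mul_perronVec_le_perronSum hnn 0 hjp)
  have hr : 0 < growthRate p := growthRate_pos (by omega)
  have hvk := perronVec_pos (p := p) hk hkp
  have hp : (0 : ℝ) < p := by exact_mod_cast (Nat.zero_lt_one.trans_le hk).trans hkp
  refine tendsto_rpow_one_div_of_bounds (c := perronSum p f 0 / (p * growthRate p ^ p))
    (C := perronSum p f 0 / perronVec p k) (by positivity) (by positivity) hr ?_ ?_
  · filter_upwards [eventually_ge_atTop p] with g hg
    obtain ⟨g, rfl⟩ := Nat.exists_eq_add_of_le' hg
    have := hf.perronSum_le hnn g hk hkp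
    rw [hf.perronSum_eq] at this
    rw [div_mul_eq_mul_div, div_le_iff₀ (by positivity), pow_add]
    calc perronSum p f 0 * (growthRate p ^ g * growthRate p ^ p)
        = growthRate p ^ g * perronSum p f 0 * growthRate p ^ p := by ring
      _ ≤ p * f (g + p) k * growthRate p ^ p := by gcongr
      _ = f (g + p) k * (p * growthRate p ^ p) := by ring
  · refine Eventually.of_forall fun g => ?_
    have := mul_perronVec_le_perronSum hnn g hkp
    rw [hf.perronSum_eq] at this
    rw [div_mul_eq_mul_div, le_div_iff₀ hvk]
    linarith

end IsPathRecurrence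

lemma binZ_succ (n : ℕ) (j : ℤ) : binZ (n + 1) j = binZ n j + binZ n (j - 1) := by
  unfold binZ
  rcases lt_trichotomy j 0 with h | rfl | h
  · rw [if_neg (by omega), if_neg (by omega), if_neg (by omega), add_zero]
  · simp
  · rw [if_pos h.le, if_pos h.le, if_pos (by omega), show j.toNat = (j - 1).toNat + 1 by omega,
      Nat.choose_succ_succ]
    push_cast; ring

lemma binZ_sub (n : ℕ) (j : ℤ) : binZ n (n - j) = binZ n j := by
  unfold binZ
  by_cases h₀ : 0 ≤ j
  · by_cases hn : j ≤ n
    · rw [if_pos (by omega), if_pos h₀, show ((n : ℤ) - j).toNat = n - j.toNat by omega,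
        Nat.choose_symm (by omega)]
    · rw [if_neg (by omega), if_pos h₀, Nat.choose_eq_zero_of_lt (by omega), Nat.cast_zero]
  · rw [if_pos (by omega), if_neg h₀, Nat.choose_eq_zero_of_lt (by omega), Nat.cast_zero]

lemma catC_succ (n : ℕ) (j : ℤ) : catC (n + 1) j = catC n j + catC n (j - 1) := by
  unfold catC; rw [binZ_succ, binZ_succ]; ring

lemma catC_reflect (n : ℕ) (j : ℤ) : catC n (n + 1 - j) = -catC n j := by
  unfold catC
  rw [show (n : ℤ) + 1 - j - 1 = n - j by ring, show (n : ℤ) + 1 - j = n - (j - 1) by ring,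
    binZ_sub, binZ_sub]
  ring

lemma catC_eq_zero {n : ℕ} {j : ℤ} (h : j < 0 ∨ n + 1 < j) : catC n j = 0 := by
  unfold catC binZ
  rcases h with h | h
  · rw [if_neg (by omega), if_neg (by omega), sub_zero]
  · rw [if_pos (by omega), if_pos (by omega), Nat.choose_eq_zero_of_lt (by omega),
      Nat.choose_eq_zero_of_lt (by omega), sub_self]

noncomputable def periodicCatC (p n : ℕ) (m : ℤ) : ℤ := ∑ᶠ s : ℤ, catC n (m + s * p)

lemma finite_support_catC_add_mul {p : ℕ} (hp : 0 < p) (n : ℕ) (m : ℤ) :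
    (Function.support fun s : ℤ => catC n (m + s * p)).Finite := by
  have hinj : Function.Injective fun s : ℤ => m + s * p := fun a b hab =>
    mul_right_cancel₀ (by positivity : (p : ℤ) ≠ 0) (add_left_cancel hab)
  refine ((Set.finite_Icc 0 ((n : ℤ) + 1)).preimage hinj.injOn).subset fun s hs => ?_
  by_contra h
  simp only [Set.mem_preimage, Set.mem_Icc, not_and_or, not_le] at h
  exact hs (catC_eq_zero h)

lemma periodicCatC_succ {p : ℕ} (hp : 0 < p) (n : ℕ) (m : ℤ) :
    periodicCatC p (n + 1) m = periodicCatC p n m + periodicCatC p n (m - 1) := by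
  unfold periodicCatC
  rw [← finsum_add_distrib (finite_support_catC_add_mul hp n m)
    (finite_support_catC_add_mul hp n (m - 1))]
  refine finsum_congr fun s => ?_
  rw [catC_succ, sub_add_eq_add_sub]

lemma periodicCatC_add_self (p n : ℕ) (m : ℤ) : periodicCatC p n (m + p) = periodicCatC p n m := by
  unfold periodicCatC
  rw [← finsum_comp_equiv (Equiv.addRight 1) (f := fun s : ℤ => catC n (m + s * p))]
  refine finsum_congr fun s => ?_
  simp only [Equiv.coe_addRight]
  ring_nf

lemma periodicCatC_reflect (p n : ℕ) (m : ℤ) :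
    periodicCatC p n (n + 1 - m) = -periodicCatC p n m := by
  unfold periodicCatC
  rw [← finsum_neg_distrib, ← finsum_comp_equiv (Equiv.neg ℤ)]
  refine finsum_congr fun s => ?_
  rw [Equiv.neg_apply, ← catC_reflect]
  ring_nf

lemma dP_of_parity {p n k : ℕ} (h : k % 2 = (n + 1) % 2) :
    dP p n k = periodicCatC p n ((n + 1 - k) / 2) := by
  unfold dP periodicCatC; rw [if_pos h]

lemma dP_of_not_parity {p n k : ℕ} (h : ¬ k % 2 = (n + 1) % 2) : dP p n k = 0 := by
  unfold dP; rw [if_neg h]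

lemma dP_at_zero (p n : ℕ) : dP p n 0 = 0 := by
  by_cases h : 0 % 2 = (n + 1) % 2
  · have hr := periodicCatC_reflect p n ((n + 1 - (0 : ℕ)) / 2)
    rw [show (n : ℤ) + 1 - (n + 1 - (0 : ℕ)) / 2 = (n + 1 - (0 : ℕ)) / 2 by omega] at hr
    rw [dP_of_parity h]
    omega
  · exact dP_of_not_parity h

lemma dP_at_self (p n : ℕ) : dP p n p = 0 := by
  by_cases h : p % 2 = (n + 1) % 2
  · have hr := periodicCatC_reflect p n ((n + 1 - p) / 2)
    rw [show (n : ℤ) + 1 - (n + 1 - p) / 2 = (n + 1 - p) / 2 + p by omega,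
      periodicCatC_add_self] at hr
    rw [dP_of_parity h]
    omega
  · exact dP_of_not_parity h

lemma dP_succ {p : ℕ} (hp : 0 < p) (n : ℕ) {k : ℕ} (hk : 1 ≤ k) :
    dP p (n + 1) k = dP p n (k - 1) + dP p n (k + 1) := by
  by_cases h : k % 2 = (n + 2) % 2
  · rw [dP_of_parity (by omega), dP_of_parity (by omega), dP_of_parity (by omega),
      periodicCatC_succ hp]
    congr 2 <;> push_cast [hk] <;> omega
  · rw [dP_of_not_parity (by omega), dP_of_not_parity (by omega), dP_of_not_parity (by omega),
      add_zero]

lemma dP_initial {p k : ℕ} (hk : 1 ≤ k) (hkp : k < p) : dP p 0 k = if k = 1 then 1 else 0 := by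
  by_cases h : k % 2 = (0 + 1) % 2
  · rw [dP_of_parity h, periodicCatC, finsum_eq_single _ 0 fun s hs => catC_eq_zero ?_]
    · split_ifs with hk1
      · subst hk1; simp [catC, binZ]
      · exact catC_eq_zero (by omega)
    · rcases lt_or_gt_of_ne hs with hs | hs
      · have : s * p ≤ -p := by nlinarith
        omega
      · have : (p : ℤ) ≤ s * p := by nlinarith
        omega
  · rw [dP_of_not_parity h, if_neg (by omega)]

lemma DP_succ {p : ℕ} (hp : 0 < p) (g : ℕ) {k : ℕ} (hk : 1 ≤ k) :
    DP p (g + 1) k = DP p g (k - 1) + 2 * DP p g k + DP p g (k + 1) := by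
  calc DP p (g + 1) k
      = ∑ n ∈ range (g + 2), ((g + 1).choose n : ℤ) * (2 ^ (g + 1 - n) * dP p n k) :=
        sum_congr rfl fun _ _ => by ring
    _ = ∑ n ∈ range (g + 1), (g.choose n : ℤ) * (2 ^ (g + 1 - n) * dP p n k)
        + ∑ n ∈ range (g + 1), (g.choose n : ℤ) * (2 ^ (g - n) * dP p (n + 1) k) :=
        sum_choose_succ_mul (fun n i => (2 : ℤ) ^ i * dP p n k) g
    _ = 2 * DP p g k + (DP p g (k - 1) + DP p g (k + 1)) := by
        congr 1
        · rw [DP, mul_sum]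
          refine sum_congr rfl fun n hn => ?_
          rw [Nat.sub_add_comm (mem_range_succ_iff.mp hn), pow_succ]
          ring
        · rw [DP, DP, ← sum_add_distrib]
          refine sum_congr rfl fun n _ => ?_
          rw [dP_succ hp n hk]
          ring
    _ = DP p g (k - 1) + 2 * DP p g k + DP p g (k + 1) := by ring

lemma DP_zero {p k : ℕ} (hk : 1 ≤ k) (hkp : k < p) : DP p 0 k = if k = 1 then 1 else 0 := by
  simp [DP, dP_initial hk hkp]

lemma isPathRecurrence_DP {p : ℕ} (hp : 0 < p) :
    IsPathRecurrence p fun g k => (DP p g k : ℝ) where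
  at_zero g := by simp [DP, dP_at_zero]
  at_p g := by simp [DP, dP_at_self]
  succ g k hk _ := by exact_mod_cast DP_succ hp g hk

theorem DP_growth_rate_general (p : ℕ) (k : ℕ)
    (hk1 : 1 ≤ k) (hk2 : k ≤ p - 1) :
    Filter.Tendsto (fun g : ℕ => (DP p g k : ℝ) ^ (1 / (g : ℝ)))
      Filter.atTop (nhds (4 * Real.cos (Real.pi / (2 * p)) ^ 2)) := by
  have hkp : k < p := by omega
  have initial_nonneg : ∀ j < p, (0 : ℝ) ≤ DP p 0 j := by
    intro j hj
    rcases Nat.eq_zero_or_pos j with rfl | hj0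
    · simp [DP, dP_at_zero]
    · rw [DP_zero hj0 hj]
      split_ifs <;> norm_num
  rw [← growthRate_eq_four_mul_cos_sq]
  exact (isPathRecurrence_DP (by omega)).tendsto_rpow_one_div initial_nonneg
    ⟨1, one_pos, by omega, by simp [DP_zero le_rfl (by omega : 1 < p)]⟩ hk1 hkp

/-- For an odd prime `p` and `1 ≤ k ≤ p-1`:
`lim_{g → ∞} D_p(g,k)^{1/g} = 4 cos²(π/(2p))`. -/
theorem DP_growth_rate (p : ℕ) (hp : p.Prime) (hodd : Odd p) (k : ℕ)
    (hk1 : 1 ≤ k) (hk2 : k ≤ p - 1) :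
    Filter.Tendsto (fun g : ℕ => (DP p g k : ℝ) ^ (1 / (g : ℝ)))
      Filter.atTop (nhds (4 * Real.cos (Real.pi / (2 * p)) ^ 2)) :=
  DP_growth_rate_general p k hk1 hk2
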